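/- Let 0 ≤ r < m with m + r even and let f and g be r-plateaued Boolean functions in m variables, each with no nonzero linear structure. Set D_f = f⁻¹(1), D_g = g⁻¹(1), and define the code C̃_{D_f} = {(x·y + s)_{y∈D_f} : x ∈ 𝔽₂^m, s ∈ 𝔽₂} ⊆ 𝔽₂^{D_f}, and similarly C̃_{D_g}. Then the two codes are equivalent — i.e., there exists a bijection π : D_f → D_g such that {c∘π : c ∈ C̃_{D_g}} = C̃_{D_f} — if and only if f and g are affine equivalent, i.e., there exists an affine permutation σ of 𝔽₂^m with f(x) = g(σ(x)) for all x ∈ 𝔽₂^m. -/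
import Mathlib


open Finset

/-- dot product on 𝔽₂^m -/
def dotp {m : ℕ} (a x : Fin m → ZMod 2) : ZMod 2 := ∑ i, a i * x i

/-- (−1)^a for a ∈ 𝔽₂, as an integer -/
def sgn (a : ZMod 2) : ℤ := if a = 0 then 1 else -1

/-- Walsh transform of f on a finite subset P of 𝔽₂^m -/
def walsh {m : ℕ} (P : Finset (Fin m → ZMod 2)) (f : (Fin m → ZMod 2) → ZMod 2)
    (u : Fin m → ZMod 2) : ℤ :=
  ∑ x ∈ P, sgn (f x + dotp u x)

/-- Walsh transform of f on all of 𝔽₂^m -/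
def walshF {m : ℕ} (f : (Fin m → ZMod 2) → ZMod 2) (u : Fin m → ZMod 2) : ℤ :=
  walsh Finset.univ f u

open Matrix

set_option maxHeartbeats 1000000

lemma sgn_add (a b : ZMod 2) : sgn (a + b) = sgn a * sgn b := by
  revert a b; decide

lemma sgn_cases (a : ZMod 2) : sgn a = 1 ∨ sgn a = -1 := by revert a; decide

lemma sgn_eq_one (a : ZMod 2) : sgn a = 1 ↔ a = 0 := by revert a; decide

@[simp] lemma sgn_zero : sgn (0 : ZMod 2) = 1 := rfl

lemma sgn_add_one (a : ZMod 2) : sgn (a + 1) = - sgn a := by revert a; decide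

lemma sgn_le_one (a : ZMod 2) : sgn a ≤ 1 := by revert a; decide

lemma addv_self {m : ℕ} (v : Fin m → ZMod 2) : v + v = 0 :=
  funext fun i => CharTwo.add_self_eq_zero (v i)

lemma addv_eq_zero {m : ℕ} (a b : Fin m → ZMod 2) : a + b = 0 ↔ a = b := by
  constructor
  · intro h
    have h2 : a + (b + b) = a := by rw [addv_self, add_zero]
    rw [← add_assoc, h, zero_add] at h2
    exact h2.symm
  · intro h; subst h; exact addv_self a

lemma dotp_comm {m : ℕ} (a x : Fin m → ZMod 2) : dotp a x = dotp x a :=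
  Finset.sum_congr rfl (fun i _ => mul_comm _ _)

lemma dotp_add_right {m : ℕ} (a x y : Fin m → ZMod 2) :
    dotp a (x + y) = dotp a x + dotp a y := by
  simp [dotp, mul_add, Finset.sum_add_distrib]

lemma dotp_add_left {m : ℕ} (a b x : Fin m → ZMod 2) :
    dotp (a + b) x = dotp a x + dotp b x := by
  simp [dotp, add_mul, Finset.sum_add_distrib]

@[simp] lemma dotp_zero_left {m : ℕ} (x : Fin m → ZMod 2) : dotp 0 x = 0 := by
  simp [dotp]

@[simp] lemma dotp_zero_right {m : ℕ} (x : Fin m → ZMod 2) : dotp x 0 = 0 := by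
  simp [dotp]

lemma dotp_single {m : ℕ} (i : Fin m) (x : Fin m → ZMod 2) :
    dotp (Pi.single i 1) x = x i := by
  simp [dotp, Pi.single_apply, Finset.sum_ite_eq Finset.univ i (fun i => x i)]

lemma dotp_nondeg {m : ℕ} (v : Fin m → ZMod 2) (h : ∀ x, dotp x v = 0) : v = 0 := by
  funext i
  have h2 := h (Pi.single i 1)
  rw [dotp_single] at h2
  simpa using h2

-- character sum
lemma char_sum {m : ℕ} (z : Fin m → ZMod 2) :
    ∑ x : Fin m → ZMod 2, sgn (dotp z x) = if z = 0 then 2 ^ m else 0 := by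
  by_cases hz : z = 0
  · simp [hz, Finset.card_univ, Fintype.card_fun]
  · simp only [hz, if_false]
    obtain ⟨i, hi⟩ : ∃ i, z i ≠ 0 := by
      by_contra h; push_neg at h; exact hz (funext fun i => h i)
    have hzi : z i = 1 := by
      have := hi; revert this; generalize z i = w; revert w; decide
    have key : ∑ x : Fin m → ZMod 2, sgn (dotp z (x + Pi.single i 1))
        = ∑ x : Fin m → ZMod 2, sgn (dotp z x) :=
      Fintype.sum_equiv (Equiv.addRight (Pi.single i 1)) _ _ (fun x => rfl)
    have hneg : ∀ x : Fin m → ZMod 2, sgn (dotp z (x + Pi.single i 1)) = - sgn (dotp z x) := by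
      intro x
      have h1 : dotp z (Pi.single i 1) = 1 := by rw [dotp_comm, dotp_single]; exact hzi
      rw [dotp_add_right, h1, sgn_add_one]
    simp only [hneg, Finset.sum_neg_distrib] at key
    linarith

lemma walsh_sq {m : ℕ} (f : (Fin m → ZMod 2) → ZMod 2) (u : Fin m → ZMod 2) :
    (walshF f u) ^ 2 = ∑ x : Fin m → ZMod 2, ∑ y : Fin m → ZMod 2,
      sgn (f x + f y) * sgn (dotp u (x + y)) := by
  rw [sq, walshF, walsh, Finset.sum_mul_sum]
  refine Finset.sum_congr rfl fun x _ => Finset.sum_congr rfl fun y _ => ?_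
  rw [← sgn_add, dotp_add_right, ← sgn_add]
  congr 1
  ring

-- inversion: ∑_u sgn(u·t) W(u)^2 = 2^m * ∑_x sgn (f x + f (x+t))
lemma walsh_inversion {m : ℕ} (f : (Fin m → ZMod 2) → ZMod 2) (t : Fin m → ZMod 2) :
    ∑ u : Fin m → ZMod 2, sgn (dotp u t) * (walshF f u) ^ 2
      = 2 ^ m * ∑ x : Fin m → ZMod 2, sgn (f x + f (x + t)) := by
  have step1 : ∀ u : Fin m → ZMod 2, sgn (dotp u t) * (walshF f u) ^ 2
      = ∑ x : Fin m → ZMod 2, ∑ y : Fin m → ZMod 2,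
        sgn (f x + f y) * sgn (dotp u (x + y + t)) := by
    intro u
    rw [walsh_sq, Finset.mul_sum]
    refine Finset.sum_congr rfl fun x _ => ?_
    rw [Finset.mul_sum]
    refine Finset.sum_congr rfl fun y _ => ?_
    rw [dotp_add_right u (x + y) t, sgn_add (dotp u (x + y)) (dotp u t),
      dotp_add_right u x y, sgn_add (dotp u x) (dotp u y)]
    ring
  simp only [step1]
  rw [Finset.sum_comm]
  have step2 : ∀ x : Fin m → ZMod 2, ∑ u : Fin m → ZMod 2, ∑ y : Fin m → ZMod 2,
      sgn (f x + f y) * sgn (dotp u (x + y + t))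
      = 2 ^ m * sgn (f x + f (x + t)) := by
    intro x
    rw [Finset.sum_comm]
    have inner : ∀ y : Fin m → ZMod 2,
        ∑ u : Fin m → ZMod 2, sgn (f x + f y) * sgn (dotp u (x + y + t))
        = sgn (f x + f y) * (if x + y + t = 0 then (2:ℤ) ^ m else 0) := by
      intro y
      rw [← Finset.mul_sum]
      congr 1
      rw [← char_sum (x + y + t)]
      exact Finset.sum_congr rfl fun u _ => by rw [dotp_comm]
    simp only [inner]
    have hcond : ∀ y : Fin m → ZMod 2, (x + y + t = 0) ↔ (y = x + t) := by
      intro y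
      have hre : x + y + t = y + (x + t) := by ring
      rw [hre]
      exact addv_eq_zero y (x + t)
    simp only [hcond, mul_ite, mul_zero]
    rw [Finset.sum_ite_eq' Finset.univ (x + t) (fun y => sgn (f x + f y) * 2 ^ m)]
    simp only [Finset.mem_univ, if_true]
    ring
  simp only [step2]
  rw [← Finset.mul_sum]

lemma parseval {m : ℕ} (f : (Fin m → ZMod 2) → ZMod 2) :
    ∑ u : Fin m → ZMod 2, (walshF f u) ^ 2 = 2 ^ m * 2 ^ m := by
  have h := walsh_inversion f 0
  have h1 : ∀ x : Fin m → ZMod 2, sgn (f x + f (x + 0)) = 1 := by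
    intro x
    rw [add_zero, CharTwo.add_self_eq_zero, sgn_zero]
  simp only [dotp_zero_right, sgn_zero, one_mul, h1, Finset.sum_const,
    Finset.card_univ, Fintype.card_fun, ZMod.card, smul_eq_mul, mul_one] at h
  simpa using h

lemma zmod2_cases (c : ZMod 2) : c = 0 ∨ c = 1 := by revert c; decide

lemma hyper_rel {m : ℕ} (f : (Fin m → ZMod 2) → ZMod 2) (a : Fin m → ZMod 2) (b : ZMod 2)
    (H : ∀ y, f y = 1 → dotp a y = b) (u : Fin m → ZMod 2) :
    walshF f u - sgn b * walshF f (u + a)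
      = (if u = 0 then (2:ℤ) ^ m else 0) - sgn b * (if u = a then (2:ℤ) ^ m else 0) := by
  have expand : walshF f (u + a) = ∑ x : Fin m → ZMod 2, sgn (f x + dotp u x) * sgn (dotp a x) := by
    unfold walshF walsh
    refine Finset.sum_congr rfl fun x _ => ?_
    rw [dotp_add_left, ← add_assoc, sgn_add]
  rw [expand]
  unfold walshF walsh
  rw [Finset.mul_sum, ← Finset.sum_sub_distrib]
  have key : ∀ x : Fin m → ZMod 2,
      sgn (f x + dotp u x) - sgn b * (sgn (f x + dotp u x) * sgn (dotp a x))
      = sgn (dotp u x) - sgn b * (sgn (dotp u x) * sgn (dotp a x)) := by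
    intro x
    rcases zmod2_cases (f x) with h0 | h1
    · rw [h0, zero_add]
    · have hax := H x h1
      rw [h1, hax]
      rcases sgn_cases b with hb | hb <;> rcases sgn_cases (1 + dotp u x) with hs | hs <;>
        rcases sgn_cases (dotp u x) with ht | ht <;> rw [hb, hs, ht] <;> ring
  simp only [key]
  rw [Finset.sum_sub_distrib]
  congr 1
  · rw [char_sum u]
  · rw [← Finset.mul_sum]
    congr 1
    have : ∀ x : Fin m → ZMod 2, sgn (dotp u x) * sgn (dotp a x) = sgn (dotp (u + a) x) := by
      intro x
      rw [dotp_add_left, sgn_add]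
    simp only [this]
    rw [char_sum (u + a)]
    congr 1
    simp only [eq_iff_iff]
    exact (addv_eq_zero u a)

lemma no_hyperplane {m r : ℕ} (hm : 3 ≤ m) (hrm : r < m) (hpar : Even (m + r))
    (f : (Fin m → ZMod 2) → ZMod 2)
    (hplat : ∀ a, walshF f a = 0 ∨ walshF f a = 2 ^ ((m + r) / 2) ∨
      walshF f a = -2 ^ ((m + r) / 2))
    (hls : ∀ a : Fin m → ZMod 2, a ≠ 0 → ¬ ∃ c : ZMod 2, ∀ x, f x + f (x + a) = c)
    (a : Fin m → ZMod 2) (b : ZMod 2) (ha : a ≠ 0) :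
    ¬ (∀ y, f y = 1 → dotp a y = b) := by
  intro H
  set h : ℕ := (m + r) / 2 with hh
  set N : ℤ := 2 ^ h with hN
  have hNpos : 0 < N := by positivity
  have hhle : h + 1 ≤ m := by
    obtain ⟨k, hk⟩ := hpar
    omega
  -- the key relation at u = 0
  have E0 := hyper_rel f a b H 0
  rw [if_pos rfl, if_neg (fun hc => ha hc.symm), mul_zero, sub_zero, zero_add] at E0
  -- bounds
  have hW0 : walshF f 0 ≤ N ∧ -N ≤ walshF f 0 := by
    rcases hplat 0 with h0 | h0 | h0 <;> rw [h0] <;> constructor <;> linarith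
  have hS : sgn b * walshF f a ≤ N ∧ -N ≤ sgn b * walshF f a := by
    rcases sgn_cases b with hb | hb <;> rcases hplat a with hA | hA | hA <;>
      rw [hb, hA] <;> constructor <;> linarith
  -- h = m - 1
  have hup : (2:ℤ) ^ m ≤ 2 ^ (h + 1) := by
    have : (2:ℤ) ^ (h + 1) = N + N := by rw [hN, pow_succ]; ring
    rw [this]
    linarith [hW0.1, hS.2, E0]
  have hmh : m = h + 1 := le_antisymm ((pow_le_pow_iff_right₀ (by norm_num)).mp hup) hhle
  have h2m : (2:ℤ) ^ m = 2 * N := by rw [hmh, hN, pow_succ]; ring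
  rw [h2m] at E0
  have hW0N : walshF f 0 = N := by linarith [hW0.1, hW0.2, hS.1, hS.2, E0]
  have hSN : sgn b * walshF f a = -N := by linarith [hW0.1, hW0.2, hS.1, hS.2, E0]
  -- relation off {0, a}
  have hrel : ∀ u : Fin m → ZMod 2, u ≠ 0 → u ≠ a →
      walshF f u = sgn b * walshF f (u + a) := by
    intro u hu0 hua
    have E := hyper_rel f a b H u
    rw [if_neg hu0, if_neg hua, mul_zero, sub_zero] at E
    linarith [E]
  -- squares
  have hsq : ∀ u : Fin m → ZMod 2, (walshF f u) ^ 2 = 0 ∨ (walshF f u) ^ 2 = N ^ 2 := by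
    intro u
    rcases hplat u with h0 | h0 | h0 <;> rw [h0] <;> simp [hN]
  have hsqa : (walshF f a) ^ 2 = N ^ 2 := by
    have : (sgn b) ^ 2 = 1 := by rcases sgn_cases b with hb | hb <;> rw [hb] <;> ring
    have h2 : (sgn b * walshF f a) ^ 2 = N ^ 2 := by rw [hSN]; ring
    rw [mul_pow, this, one_mul] at h2
    exact h2
  -- the set S of remaining points, and its filter of nonzero walsh values
  classical
  set Sf : Finset (Fin m → ZMod 2) := (Finset.univ.erase 0).erase a with hSf
  have hsum_split : ∑ u ∈ Sf, (walshF f u) ^ 2 = 2 * N ^ 2 := by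
    have hmem_a : a ∈ Finset.univ.erase 0 := Finset.mem_erase.mpr ⟨ha, Finset.mem_univ a⟩
    have e1 : ∑ u ∈ Finset.univ.erase 0, (walshF f u) ^ 2
        = (walshF f a) ^ 2 + ∑ u ∈ Sf, (walshF f u) ^ 2 :=
      (Finset.add_sum_erase _ _ hmem_a).symm
    have e2 : ∑ u : Fin m → ZMod 2, (walshF f u) ^ 2
        = (walshF f 0) ^ 2 + ∑ u ∈ Finset.univ.erase 0, (walshF f u) ^ 2 :=
      (Finset.add_sum_erase _ _ (Finset.mem_univ 0)).symm
    have hP := parseval f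
    rw [e2, e1, hW0N, hsqa, h2m] at hP
    nlinarith [hP]
  set T : Finset (Fin m → ZMod 2) := Sf.filter (fun u => walshF f u ≠ 0) with hT
  have hTsum : ∑ u ∈ Sf, (walshF f u) ^ 2 = T.card * N ^ 2 := by
    rw [← Finset.sum_filter_add_sum_filter_not Sf (fun u => walshF f u ≠ 0)]
    have hz : ∑ u ∈ Sf.filter (fun u => ¬ walshF f u ≠ 0), (walshF f u) ^ 2 = 0 := by
      apply Finset.sum_eq_zero
      intro u hu
      have := (Finset.mem_filter.mp hu).2
      push_neg at this
      rw [this]; ring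
    rw [hz, add_zero]
    rw [Finset.sum_congr rfl (fun u hu => ?_), Finset.sum_const, nsmul_eq_mul]
    have hmem := Finset.mem_filter.mp hu
    rcases hsq u with h0 | h0
    · exact absurd (pow_eq_zero_iff (n := 2) (by norm_num) |>.mp h0) hmem.2
    · exact h0
  have hTcard : T.card = 2 := by
    rw [hTsum] at hsum_split
    have : (T.card : ℤ) = 2 := by
      have hN2 : (0:ℤ) < N ^ 2 := by positivity
      nlinarith [hsum_split]
    exact_mod_cast this
  -- extract u₀
  obtain ⟨u₀, hu₀T⟩ : T.Nonempty := Finset.card_pos.mp (by omega)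
  obtain ⟨hu₀S, hWu₀⟩ := Finset.mem_filter.mp hu₀T
  have hu₀a : u₀ ≠ a := (Finset.mem_erase.mp hu₀S).1
  have hu₀0 : u₀ ≠ 0 := (Finset.mem_erase.mp (Finset.mem_erase.mp hu₀S).2).1
  have hua_ne0 : u₀ + a ≠ 0 := fun hc => hu₀a ((addv_eq_zero u₀ a).mp hc)
  have hua_nea : u₀ + a ≠ a := by
    intro hc
    apply hu₀0
    have := congrArg (· + a) hc
    simpa [add_assoc, addv_self] using this
  have hWua : walshF f (u₀ + a) ≠ 0 := by
    intro hc
    apply hWu₀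
    rw [hrel u₀ hu₀0 hu₀a, hc, mul_zero]
  have huau₀ : u₀ ≠ u₀ + a := fun hc => ha (left_eq_add.mp hc)
  have huaT : u₀ + a ∈ T := by
    refine Finset.mem_filter.mpr ⟨Finset.mem_erase.mpr ⟨hua_nea, Finset.mem_erase.mpr
      ⟨hua_ne0, Finset.mem_univ _⟩⟩, hWua⟩
  have hTeq : T = {u₀, u₀ + a} := by
    symm
    apply Finset.eq_of_subset_of_card_le
    · intro x hx
      rcases Finset.mem_insert.mp hx with hx | hx
      · rwa [hx]
      · rw [Finset.mem_singleton.mp hx]; exact huaT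
    · rw [hTcard, Finset.card_insert_of_notMem (by simpa using huau₀), Finset.card_singleton]
  have hsupp : ∀ u : Fin m → ZMod 2, walshF f u ≠ 0 →
      u = 0 ∨ u = a ∨ u = u₀ ∨ u = u₀ + a := by
    intro u hWu
    by_cases hu0 : u = 0
    · exact Or.inl hu0
    by_cases hua : u = a
    · exact Or.inr (Or.inl hua)
    have huT : u ∈ T := Finset.mem_filter.mpr ⟨Finset.mem_erase.mpr ⟨hua,
      Finset.mem_erase.mpr ⟨hu0, Finset.mem_univ _⟩⟩, hWu⟩
    rw [hTeq] at huT
    rcases Finset.mem_insert.mp huT with h1 | h1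
    · exact Or.inr (Or.inr (Or.inl h1))
    · exact Or.inr (Or.inr (Or.inr (Finset.mem_singleton.mp h1)))
  -- find t in the joint kernel
  obtain ⟨t, ht0, hat, hu0t⟩ : ∃ t : Fin m → ZMod 2, t ≠ 0 ∧ dotp a t = 0 ∧ dotp u₀ t = 0 := by
    by_contra hcon
    push_neg at hcon
    have hinj : Function.Injective (fun x : Fin m → ZMod 2 => (dotp a x, dotp u₀ x)) := by
      intro x y hxy
      simp only [Prod.mk.injEq] at hxy
      by_contra hne
      have hxy0 : x + y ≠ 0 := fun hc => hne ((addv_eq_zero x y).mp hc)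
      have h1 : dotp a (x + y) = 0 := by
        rw [dotp_add_right, hxy.1, CharTwo.add_self_eq_zero]
      have h2 : dotp u₀ (x + y) = 0 := by
        rw [dotp_add_right, hxy.2, CharTwo.add_self_eq_zero]
      exact hcon (x + y) hxy0 h1 h2
    have hcard := Fintype.card_le_of_injective _ hinj
    rw [Fintype.card_fun] at hcard
    simp only [ZMod.card, Fintype.card_prod] at hcard
    have h8 : 2 ^ 3 ≤ 2 ^ m := Nat.pow_le_pow_right (by norm_num) hm
    norm_num at hcard h8
    omega
  -- evaluate the inversion formula at t
  have hInv := walsh_inversion f t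
  set Q : Finset (Fin m → ZMod 2) := {0, a, u₀, u₀ + a} with hQ
  have hsub : ∑ u : Fin m → ZMod 2, sgn (dotp u t) * (walshF f u) ^ 2
      = ∑ u ∈ Q, sgn (dotp u t) * (walshF f u) ^ 2 := by
    symm
    apply Finset.sum_subset (Finset.subset_univ Q)
    intro u _ huQ
    have hWu : walshF f u = 0 := by
      by_contra hWu
      rcases hsupp u hWu with h1 | h1 | h1 | h1 <;> subst h1 <;> apply huQ <;> simp [hQ]
    rw [hWu]
    ring
  have hQval : ∑ u ∈ Q, sgn (dotp u t) * (walshF f u) ^ 2 = 4 * N ^ 2 := by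
    have hWu₀sq : (walshF f u₀) ^ 2 = N ^ 2 := by
      rcases hsq u₀ with h1 | h1
      · exact absurd (pow_eq_zero_iff (n := 2) (by norm_num) |>.mp h1) hWu₀
      · exact h1
    have hWuasq : (walshF f (u₀ + a)) ^ 2 = N ^ 2 := by
      rcases hsq (u₀ + a) with h1 | h1
      · exact absurd (pow_eq_zero_iff (n := 2) (by norm_num) |>.mp h1) hWua
      · exact h1
    have huat : dotp (u₀ + a) t = 0 := by
      rw [dotp_add_left, hu0t, hat, add_zero]
    have hne1 : (0 : Fin m → ZMod 2) ∉ ({a, u₀, u₀ + a} : Finset (Fin m → ZMod 2)) := by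
      simp only [Finset.mem_insert, Finset.mem_singleton]
      push_neg
      exact ⟨fun hc => ha hc.symm, fun hc => hu₀0 hc.symm, fun hc => hua_ne0 hc.symm⟩
    have hne2 : a ∉ ({u₀, u₀ + a} : Finset (Fin m → ZMod 2)) := by
      simp only [Finset.mem_insert, Finset.mem_singleton]
      push_neg
      exact ⟨fun hc => hu₀a hc.symm, fun hc => hua_nea hc.symm⟩
    have hne3 : u₀ ∉ ({u₀ + a} : Finset (Fin m → ZMod 2)) := by
      simpa using huau₀
    rw [hQ, Finset.sum_insert hne1, Finset.sum_insert hne2, Finset.sum_insert hne3,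
      Finset.sum_singleton, dotp_zero_left, hat, hu0t, huat, sgn_zero, hW0N, hsqa,
      hWu₀sq, hWuasq]
    ring
  rw [hsub, hQval, h2m] at hInv
  have hDelta : ∑ x : Fin m → ZMod 2, sgn (f x + f (x + t)) = 2 * N := by
    have h4 : 2 * N * (2 * N) = 2 * N * (∑ x : Fin m → ZMod 2, sgn (f x + f (x + t))) := by
      linarith [hInv]
    exact (mul_left_cancel₀ (by positivity) h4).symm
  have hall : ∀ x : Fin m → ZMod 2, sgn (f x + f (x + t)) = 1 := by
    by_contra hcon
    push_neg at hcon
    obtain ⟨x₀, hx₀⟩ := hcon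
    have hlt : ∑ x : Fin m → ZMod 2, sgn (f x + f (x + t))
        < ∑ _x : Fin m → ZMod 2, (1 : ℤ) := by
      apply Finset.sum_lt_sum (fun i _ => sgn_le_one _)
      exact ⟨x₀, Finset.mem_univ x₀, lt_of_le_of_ne (sgn_le_one _) hx₀⟩
    simp only [Finset.sum_const, Finset.card_univ, Fintype.card_fun, ZMod.card,
      Fintype.card_fin, nsmul_eq_mul, smul_eq_mul, mul_one, hDelta] at hlt
    push_cast at hlt
    linarith [h2m]
  exact hls t ht0 ⟨0, fun x => (sgn_eq_one _).mp (hall x)⟩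

lemma zmod2_shuffle1 (a b c : ZMod 2) : a + b + (b + c) = a + c := by revert a b c; decide

lemma dotp_mulVec {m : ℕ} (x : Fin m → ZMod 2) (M : Matrix (Fin m) (Fin m) (ZMod 2))
    (y : Fin m → ZMod 2) : dotp x (M.mulVec y) = dotp (Matrix.vecMul x M) y :=
  Matrix.dotProduct_mulVec x M y

lemma bwd {m : ℕ} (f g : (Fin m → ZMod 2) → ZMod 2)
    (L : (Fin m → ZMod 2) ≃ₗ[ZMod 2] (Fin m → ZMod 2)) (c : Fin m → ZMod 2)
    (hfg : ∀ x, f x = g (L x + c)) :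
    ∃ π : (Fin m → ZMod 2) → (Fin m → ZMod 2),
      Set.BijOn π {x | f x = 1} {x | g x = 1} ∧
      (∀ (x : Fin m → ZMod 2) (s : ZMod 2), ∃ (x' : Fin m → ZMod 2) (s' : ZMod 2),
        ∀ y : Fin m → ZMod 2, f y = 1 → dotp x (π y) + s = dotp x' y + s') ∧
      (∀ (x' : Fin m → ZMod 2) (s' : ZMod 2), ∃ (x : Fin m → ZMod 2) (s : ZMod 2),
        ∀ y : Fin m → ZMod 2, f y = 1 → dotp x (π y) + s = dotp x' y + s') := by
  set π : (Fin m → ZMod 2) → (Fin m → ZMod 2) := fun x => L x + c with hπ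
  set M : Matrix (Fin m) (Fin m) (ZMod 2) := LinearMap.toMatrix' (L : _ →ₗ[ZMod 2] _) with hM
  set M' : Matrix (Fin m) (Fin m) (ZMod 2) :=
    LinearMap.toMatrix' (L.symm : _ →ₗ[ZMod 2] _) with hM'
  have hLM : ∀ v, M.mulVec v = L v := by
    intro v
    rw [hM, ← Matrix.toLin'_apply, Matrix.toLin'_toMatrix']
    rfl
  have hMM' : M' * M = 1 := by
    rw [hM, hM', ← LinearMap.toMatrix'_comp]
    have h0 : L.symm.toLinearMap.comp L.toLinearMap
        = (LinearMap.id : (Fin m → ZMod 2) →ₗ[ZMod 2] (Fin m → ZMod 2)) := by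
      ext v
      simp
    rw [h0, LinearMap.toMatrix'_id]
  refine ⟨π, ⟨?_, ?_, ?_⟩, ?_, ?_⟩
  · intro y hy
    simp only [Set.mem_setOf_eq] at *
    rw [← hfg y]; exact hy
  · intro y _ y' _ hyy'
    simp only [hπ] at hyy'
    have := add_right_cancel hyy'
    exact L.injective this
  · intro z hz
    simp only [Set.mem_setOf_eq] at hz
    refine ⟨L.symm (z + c), ?_, ?_⟩
    · simp only [Set.mem_setOf_eq]
      rw [hfg]
      simp only [LinearEquiv.apply_symm_apply]
      rw [add_assoc, addv_self, add_zero]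
      exact hz
    · simp only [hπ, LinearEquiv.apply_symm_apply]
      rw [add_assoc, addv_self, add_zero]
  · intro x s
    refine ⟨Matrix.vecMul x M, dotp x c + s, fun y _ => ?_⟩
    simp only [hπ]
    rw [← hLM, dotp_add_right, dotp_mulVec, add_assoc]
  · intro x' s'
    refine ⟨Matrix.vecMul x' M', dotp (Matrix.vecMul x' M') c + s', fun y _ => ?_⟩
    simp only [hπ]
    rw [← hLM, dotp_add_right, dotp_mulVec, Matrix.vecMul_vecMul, hMM', Matrix.vecMul_one]
    exact zmod2_shuffle1 _ _ _

lemma dotp_ext {m : ℕ} (w₁ w₂ : Fin m → ZMod 2) (h : ∀ x, dotp x w₁ = dotp x w₂) :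
    w₁ = w₂ := by
  rw [← addv_eq_zero]
  apply dotp_nondeg
  intro x
  rw [dotp_add_right, h x, CharTwo.add_self_eq_zero]

lemma dotp_transpose {m : ℕ} (M : Matrix (Fin m) (Fin m) (ZMod 2))
    (x w : Fin m → ZMod 2) : dotp (M.mulVec x) w = dotp x (Mᵀ.mulVec w) := by
  show dotProduct _ _ = dotProduct _ _
  rw [Matrix.mulVec_transpose, dotProduct_comm, Matrix.dotProduct_mulVec,
    dotProduct_comm]

lemma fwd_main {m : ℕ} (f g : (Fin m → ZMod 2) → ZMod 2)
    (hnf : ∀ (a : Fin m → ZMod 2) (b : ZMod 2), a ≠ 0 → ¬ (∀ y, f y = 1 → dotp a y = b))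
    (hng : ∀ (a : Fin m → ZMod 2) (b : ZMod 2), a ≠ 0 → ¬ (∀ y, g y = 1 → dotp a y = b))
    (hne : ∃ y₀, f y₀ = 1)
    (π : (Fin m → ZMod 2) → (Fin m → ZMod 2))
    (hbij : Set.BijOn π {x | f x = 1} {x | g x = 1})
    (hcode1 : ∀ (x : Fin m → ZMod 2) (s : ZMod 2), ∃ (x' : Fin m → ZMod 2) (s' : ZMod 2),
        ∀ y : Fin m → ZMod 2, f y = 1 → dotp x (π y) + s = dotp x' y + s') :
    ∃ (L : (Fin m → ZMod 2) ≃ₗ[ZMod 2] (Fin m → ZMod 2)) (c : Fin m → ZMod 2),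
      ∀ x, f x = g (L x + c) := by
  classical
  have hA0 : ∀ x : Fin m → ZMod 2, ∃ (x' : Fin m → ZMod 2) (s' : ZMod 2),
      ∀ y, f y = 1 → dotp x (π y) = dotp x' y + s' := by
    intro x
    obtain ⟨x', s', hx⟩ := hcode1 x 0
    exact ⟨x', s', fun y hy => by have := hx y hy; rwa [add_zero] at this⟩
  choose A β hAβ using hA0
  -- uniqueness of the linear part
  have uniq : ∀ (x₁ x₂ : Fin m → ZMod 2) (s₁ s₂ : ZMod 2),
      (∀ y, f y = 1 → dotp x₁ y + s₁ = dotp x₂ y + s₂) → x₁ = x₂ := by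
    intro x₁ x₂ s₁ s₂ hcst
    by_contra hne'
    have hv : x₁ + x₂ ≠ 0 := fun hc => hne' ((addv_eq_zero _ _).mp hc)
    apply hnf (x₁ + x₂) (s₁ + s₂) hv
    intro y hy
    have h1 := hcst y hy
    rw [dotp_add_left]
    have shuffle : ∀ a b c d : ZMod 2, a + c = b + d → a + b = c + d := by decide
    exact shuffle _ _ _ _ h1
  -- additivity
  have hAadd : ∀ x₁ x₂, A (x₁ + x₂) = A x₁ + A x₂ := by
    intro x₁ x₂
    apply uniq (A (x₁ + x₂)) (A x₁ + A x₂) (β (x₁ + x₂)) (β x₁ + β x₂)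
    intro y hy
    rw [← hAβ (x₁ + x₂) y hy, dotp_add_left (A x₁) (A x₂) y, dotp_add_left x₁ x₂ (π y),
      hAβ x₁ y hy, hAβ x₂ y hy]
    have shuffle : ∀ a b c d : ZMod 2, (a + b) + (c + d) = (a + c) + (b + d) := by decide
    exact shuffle _ _ _ _
  -- injectivity
  have hAinj : ∀ x₁ x₂, A x₁ = A x₂ → x₁ = x₂ := by
    intro x₁ x₂ hAx
    by_contra hne'
    have hv : x₁ + x₂ ≠ 0 := fun hc => hne' ((addv_eq_zero _ _).mp hc)
    apply hng (x₁ + x₂) (β x₁ + β x₂) hv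
    intro z hz
    obtain ⟨y, hyDf, rfl⟩ := hbij.surjOn hz
    rw [dotp_add_left, hAβ x₁ y hyDf, hAβ x₂ y hyDf, ← hAx]
    have shuffle : ∀ a b c : ZMod 2, (a + b) + (a + c) = b + c := by decide
    exact shuffle _ _ _
  -- the matrix of A
  set ℓ : (Fin m → ZMod 2) →ₗ[ZMod 2] (Fin m → ZMod 2) :=
    AddMonoidHom.toZModLinearMap 2 (AddMonoidHom.mk' A hAadd) with hℓ
  have hℓA : ∀ v, ℓ v = A v := fun v => rfl
  set M : Matrix (Fin m) (Fin m) (ZMod 2) := LinearMap.toMatrix' ℓ with hM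
  have hMA : ∀ v, M.mulVec v = A v := by
    intro v
    rw [hM, ← Matrix.toLin'_apply, Matrix.toLin'_toMatrix']
    exact hℓA v
  -- A is surjective
  have hAsurj : Function.Surjective A := by
    have hinj : Function.Injective ℓ := fun x y hxy => hAinj x y (by rwa [hℓA, hℓA] at hxy)
    have := (LinearMap.injective_iff_surjective (f := ℓ)).mp hinj
    intro w
    obtain ⟨v, hv⟩ := this w
    exact ⟨v, by rw [← hℓA]; exact hv⟩
  -- the transpose map is bijective
  set ℓT : (Fin m → ZMod 2) →ₗ[ZMod 2] (Fin m → ZMod 2) := Matrix.mulVecLin (Mᵀ) with hℓT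
  have hℓTapp : ∀ v, ℓT v = Mᵀ.mulVec v := fun v => rfl
  have hℓTinj : Function.Injective ℓT := by
    intro v₁ v₂ hv
    rw [hℓTapp, hℓTapp] at hv
    apply dotp_ext
    intro u
    obtain ⟨x, rfl⟩ := hAsurj u
    rw [← hMA, dotp_comm (M.mulVec x) v₁, dotp_comm (M.mulVec x) v₂]
    rw [dotp_comm v₁ (M.mulVec x), dotp_comm v₂ (M.mulVec x), dotp_transpose, dotp_transpose, hv]
  have hℓTbij : Function.Bijective ℓT :=
    ⟨hℓTinj, (LinearMap.injective_iff_surjective (f := ℓT)).mp hℓTinj⟩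
  set L : (Fin m → ZMod 2) ≃ₗ[ZMod 2] (Fin m → ZMod 2) :=
    LinearEquiv.ofBijective ℓT hℓTbij with hL
  have hLapp : ∀ v, L v = Mᵀ.mulVec v := fun v => rfl
  obtain ⟨y₀, hy₀⟩ := hne
  set c : Fin m → ZMod 2 := Mᵀ.mulVec y₀ + π y₀ with hc
  set σ : (Fin m → ZMod 2) → (Fin m → ZMod 2) := fun y => L y + c with hσ
  -- π agrees with σ on D_f
  have hπσ : ∀ y, f y = 1 → π y = σ y := by
    intro y hy
    have hveq : π y + π y₀ = Mᵀ.mulVec y + Mᵀ.mulVec y₀ := by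
      apply dotp_ext
      intro x
      rw [dotp_add_right, dotp_add_right, hAβ x y hy, hAβ x y₀ hy₀,
        ← dotp_transpose M x y, ← dotp_transpose M x y₀, hMA]
      have shuffle : ∀ a b c : ZMod 2, (a + c) + (b + c) = a + b := by decide
      exact shuffle _ _ _
    have h2 : (π y + π y₀) + π y₀ = π y := by
      rw [add_assoc, addv_self, add_zero]
    rw [hσ]
    simp only [hLapp]
    rw [← h2, hveq, hc, add_assoc]
  -- σ is injective
  have hσinj : Function.Injective σ := by
    intro y₁ y₂ hy
    simp only [hσ] at hy
    exact L.injective (add_right_cancel hy)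
  -- conclude
  refine ⟨L, c, fun x => ?_⟩
  rcases zmod2_cases (f x) with hfx | hfx
  · rw [hfx]
    by_contra hgx
    have hgx1 : g (L x + c) = 1 := by
      rcases zmod2_cases (g (L x + c)) with h1 | h1
      · exact absurd h1.symm hgx
      · exact h1
    have hmem : (L x + c) ∈ {z | g z = 1} := hgx1
    obtain ⟨y', hy'Df, hπy'⟩ := hbij.surjOn hmem
    have : σ y' = σ x := by rw [← hπσ y' hy'Df]; exact hπy'
    have hxy := hσinj this
    rw [← hxy] at hfx
    simp only [Set.mem_setOf_eq] at hy'Df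
    rw [hy'Df] at hfx
    exact one_ne_zero hfx
  · rw [hfx]
    have := hbij.mapsTo (show x ∈ {x | f x = 1} from hfx)
    simp only [Set.mem_setOf_eq] at this
    rw [show L x + c = σ x from rfl, ← hπσ x hfx]
    exact this.symm

lemma zmod2_eq_of_iff (a b : ZMod 2) (h : a = 1 ↔ b = 1) : a = b := by
  revert a b; decide

lemma addv_shift {m : ℕ} (x t y : Fin m → ZMod 2) : x + t = y ↔ x = y + t := by
  constructor
  · rintro rfl; rw [add_assoc, addv_self, add_zero]
  · rintro rfl; rw [add_assoc, addv_self, add_zero]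

lemma addv_mix {m : ℕ} (p q : Fin m → ZMod 2) : q + (p + q) = p := by
  rw [add_comm p q, ← add_assoc, addv_self, zero_add]

lemma supp_nonempty {m : ℕ} (hm : 1 ≤ m) (f : (Fin m → ZMod 2) → ZMod 2)
    (hls : ∀ a : Fin m → ZMod 2, a ≠ 0 → ¬ ∃ c : ZMod 2, ∀ x, f x + f (x + a) = c) :
    ∃ y, f y = 1 := by
  by_contra hcon
  push_neg at hcon
  have hz : ∀ y, f y = 0 := fun y => (zmod2_cases (f y)).resolve_right (hcon y)
  set i0 : Fin m := ⟨0, hm⟩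
  have ha : (Pi.single i0 1 : Fin m → ZMod 2) ≠ 0 := by
    intro hc
    have := congrFun hc i0
    simp at this
  exact hls _ ha ⟨0, fun x => by rw [hz x, hz (x + _), add_zero]⟩

lemma card_support {m : ℕ} (f : (Fin m → ZMod 2) → ZMod 2) :
    walshF f 0 = 2 ^ m - 2 * ((Finset.univ.filter (fun x => f x = 1)).card : ℤ) := by
  classical
  have h1 : walshF f 0 = ∑ x : Fin m → ZMod 2, sgn (f x) := by
    unfold walshF walsh
    exact Finset.sum_congr rfl fun x _ => by rw [dotp_zero_left, add_zero]
  rw [h1, ← Finset.sum_filter_add_sum_filter_not Finset.univ (fun x => f x = 1)]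
  have e2 : ∀ x ∈ Finset.univ.filter (fun x => f x = 1), sgn (f x) = -1 := by
    intro x hx
    rw [(Finset.mem_filter.mp hx).2]
    rfl
  have e3 : ∀ x ∈ Finset.univ.filter (fun x => ¬ f x = 1), sgn (f x) = 1 := by
    intro x hx
    rw [(zmod2_cases (f x)).resolve_right (Finset.mem_filter.mp hx).2]
    rfl
  rw [Finset.sum_congr rfl e2, Finset.sum_congr rfl e3, Finset.sum_const, Finset.sum_const,
    nsmul_eq_mul, nsmul_eq_mul, mul_neg_one, mul_one]
  have h4 := Finset.card_filter_add_card_filter_not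
    (s := (Finset.univ : Finset (Fin m → ZMod 2))) (p := fun x => f x = 1)
  rw [Finset.card_univ, Fintype.card_fun, ZMod.card, Fintype.card_fin] at h4
  have hc : ((2:ℤ) ^ m) = ((2 ^ m : ℕ) : ℤ) := by push_cast; ring
  omega

lemma two_support_ls {m : ℕ} (f : (Fin m → ZMod 2) → ZMod 2)
    (hk : (Finset.univ.filter (fun x => f x = 1)).card = 2) :
    ∃ t : Fin m → ZMod 2, t ≠ 0 ∧ ∀ x, f x + f (x + t) = 0 := by
  classical
  obtain ⟨p, q, hpq, hset⟩ := Finset.card_eq_two.mp hk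
  have hmem : ∀ x, f x = 1 ↔ (x = p ∨ x = q) := by
    intro x
    constructor
    · intro h
      have : x ∈ Finset.univ.filter (fun x => f x = 1) := Finset.mem_filter.mpr ⟨Finset.mem_univ x, h⟩
      rw [hset] at this
      simpa using this
    · intro h
      have : x ∈ ({p, q} : Finset (Fin m → ZMod 2)) := by simpa using h
      rw [← hset] at this
      exact (Finset.mem_filter.mp this).2
  set t : Fin m → ZMod 2 := p + q with ht
  have ht0 : t ≠ 0 := fun hc => hpq ((addv_eq_zero p q).mp hc)
  have hft : ∀ x, f (x + t) = f x := by
    intro x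
    apply zmod2_eq_of_iff
    rw [hmem, hmem]
    have hpt : p + t = q := by rw [ht, ← add_assoc, addv_self, zero_add]
    have hqt : q + t = p := by rw [ht, addv_mix]
    constructor
    · rintro (h | h)
      · right
        rw [addv_shift] at h
        rw [h, hpt]
      · left
        rw [addv_shift] at h
        rw [h, hqt]
    · rintro (h | h)
      · right; rw [h, hpt]
      · left; rw [h, hqt]
  exact ⟨t, ht0, fun x => by rw [hft x, CharTwo.add_self_eq_zero]⟩

lemma filter_one_iff {m : ℕ} (p : (Fin m → ZMod 2) → Prop) [DecidablePred p]
    (w : Fin m → ZMod 2) (hp : Finset.univ.filter p = ({w} : Finset (Fin m → ZMod 2))) :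
    ∀ x, p x ↔ x = w := by
  intro x
  constructor
  · intro h
    have : x ∈ Finset.univ.filter p := Finset.mem_filter.mpr ⟨Finset.mem_univ x, h⟩
    rw [hp] at this
    simpa using this
  · intro h
    subst h
    have hw : x ∈ Finset.univ.filter p := by
      rw [hp]
      exact Finset.mem_singleton_self x
    exact (Finset.mem_filter.mp hw).2

lemma fwd_m2 (f g : (Fin 2 → ZMod 2) → ZMod 2)
    (hplatf : ∀ a, walshF f a = 0 ∨ walshF f a = 2 ∨ walshF f a = -2)
    (hplatg : ∀ a, walshF g a = 0 ∨ walshF g a = 2 ∨ walshF g a = -2)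
    (hlsf : ∀ a : Fin 2 → ZMod 2, a ≠ 0 → ¬ ∃ c : ZMod 2, ∀ x, f x + f (x + a) = c)
    (hlsg : ∀ a : Fin 2 → ZMod 2, a ≠ 0 → ¬ ∃ c : ZMod 2, ∀ x, g x + g (x + a) = c)
    (π : (Fin 2 → ZMod 2) → (Fin 2 → ZMod 2))
    (hbij : Set.BijOn π {x | f x = 1} {x | g x = 1}) :
    ∃ (L : (Fin 2 → ZMod 2) ≃ₗ[ZMod 2] (Fin 2 → ZMod 2)) (c : Fin 2 → ZMod 2),
      ∀ x, f x = g (L x + c) := by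
  classical
  have hWf := card_support f
  have hWg := card_support g
  have hkf13 : (Finset.univ.filter (fun x => f x = 1)).card = 1 ∨
      (Finset.univ.filter (fun x => f x = 1)).card = 3 := by
    have h2 : (Finset.univ.filter (fun x => f x = 1)).card ≠ 2 := by
      intro h2
      obtain ⟨t, ht0, hconst⟩ := two_support_ls f h2
      exact hlsf t ht0 ⟨0, hconst⟩
    rcases hplatf 0 with h | h | h <;> rw [h] at hWf <;> norm_num at hWf <;> omega
  have hkg13 : (Finset.univ.filter (fun x => g x = 1)).card = 1 ∨
      (Finset.univ.filter (fun x => g x = 1)).card = 3 := by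
    have h2 : (Finset.univ.filter (fun x => g x = 1)).card ≠ 2 := by
      intro h2
      obtain ⟨t, ht0, hconst⟩ := two_support_ls g h2
      exact hlsg t ht0 ⟨0, hconst⟩
    rcases hplatg 0 with h | h | h <;> rw [h] at hWg <;> norm_num at hWg <;> omega
  have hkeq : (Finset.univ.filter (fun x => f x = 1)).card
      = (Finset.univ.filter (fun x => g x = 1)).card := by
    have himg := hbij.image_eq
    have h1 : {x | f x = 1}.ncard = (Finset.univ.filter (fun x => f x = 1)).card := by
      rw [show {x : Fin 2 → ZMod 2 | f x = 1}
        = ((Finset.univ.filter (fun x => f x = 1) : Finset _) : Set _) from by ext x; simp,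
        Set.ncard_coe_finset]
    have h2 : {x | g x = 1}.ncard = (Finset.univ.filter (fun x => g x = 1)).card := by
      rw [show {x : Fin 2 → ZMod 2 | g x = 1}
        = ((Finset.univ.filter (fun x => g x = 1) : Finset _) : Set _) from by ext x; simp,
        Set.ncard_coe_finset]
    calc (Finset.univ.filter (fun x => f x = 1)).card
        = {x | f x = 1}.ncard := h1.symm
      _ = (π '' {x | f x = 1}).ncard := (Set.ncard_image_of_injOn hbij.injOn).symm
      _ = {x | g x = 1}.ncard := by rw [himg]
      _ = (Finset.univ.filter (fun x => g x = 1)).card := h2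
  have hcard4 : Fintype.card (Fin 2 → ZMod 2) = 4 := by
    rw [Fintype.card_fun, ZMod.card, Fintype.card_fin]
    norm_num
  rcases hkf13 with h1 | h3
  · have hg1 : (Finset.univ.filter (fun x => g x = 1)).card = 1 := by omega
    obtain ⟨p, hp⟩ := Finset.card_eq_one.mp h1
    obtain ⟨q, hq⟩ := Finset.card_eq_one.mp hg1
    have hfiff := filter_one_iff _ p hp
    have hgiff := filter_one_iff _ q hq
    refine ⟨LinearEquiv.refl _ _, p + q, fun x => ?_⟩
    apply zmod2_eq_of_iff
    rw [hfiff, hgiff]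
    simp only [LinearEquiv.refl_apply]
    rw [addv_shift, addv_mix]
  · have hg3 : (Finset.univ.filter (fun x => g x = 1)).card = 3 := by omega
    have hf0 : (Finset.univ.filter (fun x => ¬ f x = 1)).card = 1 := by
      have h4 := Finset.card_filter_add_card_filter_not
        (s := (Finset.univ : Finset (Fin 2 → ZMod 2))) (p := fun x => f x = 1)
      rw [Finset.card_univ, hcard4] at h4
      omega
    have hg0 : (Finset.univ.filter (fun x => ¬ g x = 1)).card = 1 := by
      have h4 := Finset.card_filter_add_card_filter_not
        (s := (Finset.univ : Finset (Fin 2 → ZMod 2))) (p := fun x => g x = 1)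
      rw [Finset.card_univ, hcard4] at h4
      omega
    obtain ⟨p, hp⟩ := Finset.card_eq_one.mp hf0
    obtain ⟨q, hq⟩ := Finset.card_eq_one.mp hg0
    have hfiff := filter_one_iff _ p hp
    have hgiff := filter_one_iff _ q hq
    refine ⟨LinearEquiv.refl _ _, p + q, fun x => ?_⟩
    apply zmod2_eq_of_iff
    simp only [LinearEquiv.refl_apply]
    have hf' : f x = 1 ↔ ¬ (x = p) := by
      rw [← hfiff x]
      tauto
    have hg' : g (x + (p + q)) = 1 ↔ ¬ (x + (p + q) = q) := by
      rw [← hgiff (x + (p + q))]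
      tauto
    rw [hf', hg']
    apply not_congr
    rw [addv_shift, addv_mix]


theorem stmt_13 (m r : ℕ) (hrm : r < m) (hpar : Even (m + r))
    (f g : (Fin m → ZMod 2) → ZMod 2)
    (hplatf : ∀ a, walshF f a = 0 ∨ walshF f a = 2 ^ ((m + r) / 2) ∨
      walshF f a = -2 ^ ((m + r) / 2))
    (hplatg : ∀ a, walshF g a = 0 ∨ walshF g a = 2 ^ ((m + r) / 2) ∨
      walshF g a = -2 ^ ((m + r) / 2))
    (hlsf : ∀ a : Fin m → ZMod 2, a ≠ 0 → ¬ ∃ c : ZMod 2, ∀ x, f x + f (x + a) = c)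
    (hlsg : ∀ a : Fin m → ZMod 2, a ≠ 0 → ¬ ∃ c : ZMod 2, ∀ x, g x + g (x + a) = c) :
    -- the codes C̃_{D_f} and C̃_{D_g} are equivalent, i.e. there is a bijection
    -- π : D_f → D_g with {c ∘ π : c ∈ C̃_{D_g}} = C̃_{D_f}
    (∃ π : (Fin m → ZMod 2) → (Fin m → ZMod 2),
      Set.BijOn π {x | f x = 1} {x | g x = 1} ∧
      (∀ (x : Fin m → ZMod 2) (s : ZMod 2), ∃ (x' : Fin m → ZMod 2) (s' : ZMod 2),
        ∀ y : Fin m → ZMod 2, f y = 1 → dotp x (π y) + s = dotp x' y + s') ∧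
      (∀ (x' : Fin m → ZMod 2) (s' : ZMod 2), ∃ (x : Fin m → ZMod 2) (s : ZMod 2),
        ∀ y : Fin m → ZMod 2, f y = 1 → dotp x (π y) + s = dotp x' y + s'))
    ↔
    -- f and g are affine equivalent
    (∃ (L : (Fin m → ZMod 2) ≃ₗ[ZMod 2] (Fin m → ZMod 2)) (c : Fin m → ZMod 2),
      ∀ x, f x = g (L x + c)) := by
  constructor
  · rintro ⟨π, hbij, hcode1, hcode2⟩
    have hm2 : 2 ≤ m := by
      obtain ⟨k, hk⟩ := hpar
      omega
    rcases eq_or_lt_of_le hm2 with hm | hm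
    · -- the exceptional case m = 2
      subst hm
      have hr0 : r = 0 := by
        obtain ⟨k, hk⟩ := hpar
        omega
      subst hr0
      norm_num at hplatf hplatg
      exact fwd_m2 f g hplatf hplatg hlsf hlsg π hbij
    · -- the main case m ≥ 3
      exact fwd_main f g
        (fun a b ha => no_hyperplane hm hrm hpar f hplatf hlsf a b ha)
        (fun a b ha => no_hyperplane hm hrm hpar g hplatg hlsg a b ha)
        (supp_nonempty (by omega) f hlsf) π hbij hcode1
  · rintro ⟨L, c, hfg⟩
    exact bwd f g L c hfg
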